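/- arXiv:2306.12996 — 2 statements merged into one kernel-verified Lean document; each statement's English description precedes it below -/
import Mathlib

section
/- Constant-rotation-rate degeneracy: if Q₁ = Q₂ = Q, s₁ = s₂ = s, and R s − s = a(t₂ − R t₁) for some a ∈ ℝ, then the essential matrix E = Qᵀ(R[s − t₁]× + [t₂ − s]×R)Q equals (1 + a)·Qᵀ[t₂ − R t₁]× R Q. -/
open Matrix

def skew (v : Fin 3 → ℝ) : Matrix (Fin 3) (Fin 3) ℝ :=
  !![0, -v 2, v 1;
     v 2, 0, -v 0;
     -v 1, v 0, 0]

set_option maxHeartbeats 1000000 in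
lemma skew_comm (R : Matrix (Fin 3) (Fin 3) ℝ)
    (hR : Rᵀ * R = 1) (hdR : R.det = 1) (v : Fin 3 → ℝ) :
    R * skew v = skew (R.mulVec v) * R := by
  have hinv : R⁻¹ = Rᵀ := inv_eq_left_inv hR
  have hadj : R.adjugate = Rᵀ := by
    rw [← hinv, Matrix.inv_def, hdR]; simp
  rw [Matrix.adjugate_fin_three] at hadj
  have h00 := congrFun (congrFun hadj 0) 0
  have h01 := congrFun (congrFun hadj 0) 1
  have h02 := congrFun (congrFun hadj 0) 2
  have h10 := congrFun (congrFun hadj 1) 0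
  have h11 := congrFun (congrFun hadj 1) 1
  have h12 := congrFun (congrFun hadj 1) 2
  have h20 := congrFun (congrFun hadj 2) 0
  have h21 := congrFun (congrFun hadj 2) 1
  have h22 := congrFun (congrFun hadj 2) 2
  simp [Matrix.transpose_apply] at h00 h01 h02 h10 h11 h12 h20 h21 h22
  ext i j
  fin_cases i <;> fin_cases j <;>
    simp [skew, Matrix.mul_apply, Matrix.mulVec, dotProduct,
      Fin.sum_univ_three]
  · linear_combination v 1 * h20 - v 2 * h10
  · linear_combination v 2 * h00 - v 0 * h20
  · linear_combination v 0 * h10 - v 1 * h00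
  · linear_combination v 1 * h21 - v 2 * h11
  · linear_combination v 2 * h01 - v 0 * h21
  · linear_combination v 0 * h11 - v 1 * h01
  · linear_combination v 1 * h22 - v 2 * h12
  · linear_combination v 2 * h02 - v 0 * h22
  · linear_combination v 0 * h12 - v 1 * h02

lemma skew_add (x y : Fin 3 → ℝ) : skew (x + y) = skew x + skew y := by
  ext i j; fin_cases i <;> fin_cases j <;> simp [skew] <;> ring

lemma skew_smul (c : ℝ) (x : Fin 3 → ℝ) : skew (c • x) = c • skew x := by
  ext i j; fin_cases i <;> fin_cases j <;> simp [skew] <;> ring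

theorem constant_rotation_rate_degeneracy
    (Q R : Matrix (Fin 3) (Fin 3) ℝ)
    (hQ : Qᵀ * Q = 1) (hdQ : Q.det = 1)
    (hR : Rᵀ * R = 1) (hdR : R.det = 1)
    (s t₁ t₂ : Fin 3 → ℝ) (a : ℝ)
    (h : R.mulVec s - s = a • (t₂ - R.mulVec t₁)) :
    R * skew (s - t₁) + skew (t₂ - s) * R
      = (1 + a) • (skew (t₂ - R.mulVec t₁) * R) := by
  rw [skew_comm R hR hdR]
  have : skew (R.mulVec (s - t₁)) + skew (t₂ - s)
      = (1 + a) • skew (t₂ - R.mulVec t₁) := by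
    have hvec : R.mulVec (s - t₁) + (t₂ - s) = (1 + a) • (t₂ - R.mulVec t₁) := by
      funext i
      have := congrFun h i
      simp only [Matrix.mulVec_sub, Pi.add_apply, Pi.sub_apply, Pi.smul_apply,
        smul_eq_mul] at this ⊢
      linear_combination this
    rw [← skew_add, hvec, skew_smul]
  rw [← Matrix.add_mul, this, Matrix.smul_mul]
end

section
/- An essential matrix E = [t]× R (with R ∈ SO(3), t ∈ ℝ³) satisfies the cubic constraint 2 E Eᵀ E − trace(E Eᵀ) E = 0. -/
set_option maxHeartbeats 1000000


open Matrix

lemma skew_transpose (t : Fin 3 → ℝ) : (skew t)ᵀ = -skew t := by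
  ext i j
  fin_cases i <;> fin_cases j <;> simp [skew]

lemma skew_cubic (t : Fin 3 → ℝ) :
    2 • (skew t * (skew t)ᵀ * skew t)
      = (trace (skew t * (skew t)ᵀ)) • (skew t) := by
  rw [skew_transpose, Matrix.mul_neg, Matrix.neg_mul, Matrix.trace_neg]
  have htr : trace (skew t * skew t) = -(2 * (t 0 ^ 2 + t 1 ^ 2 + t 2 ^ 2)) := by
    simp [skew, Matrix.trace_fin_three, Matrix.mul_apply, Fin.sum_univ_three]
    ring
  rw [htr, neg_neg]
  ext i j
  fin_cases i <;> fin_cases j <;>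
    simp [skew, Matrix.mul_apply, Fin.sum_univ_three] <;> ring

theorem essential_cubic_constraint (t : Fin 3 → ℝ) (R : Matrix (Fin 3) (Fin 3) ℝ)
    (hR : Rᵀ * R = 1) (hdR : R.det = 1) :
    2 • (skew t * R * (skew t * R)ᵀ * (skew t * R))
      = (trace (skew t * R * (skew t * R)ᵀ)) • (skew t * R) := by
  have hRR : R * Rᵀ = 1 := mul_eq_one_comm.mp hR
  have key : skew t * R * (skew t * R)ᵀ = skew t * (skew t)ᵀ := by
    rw [Matrix.transpose_mul, Matrix.mul_assoc, ← Matrix.mul_assoc R, hRR, Matrix.one_mul]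
  rw [key, show skew t * (skew t)ᵀ * (skew t * R) = skew t * (skew t)ᵀ * skew t * R from
      (Matrix.mul_assoc _ _ _).symm,
    ← Matrix.smul_mul, skew_cubic, Matrix.smul_mul]
end
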